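/- Let K ⊆ ℝ^d be a nonempty closed set, let (x_i)_{i∈ℕ} ⊆ K be a sequence converging to a point x ∈ K, and let S be a nonempty closed set with S ∈ Ψ-Tan(K, x_i) for every i ∈ ℕ. Then S ∈ Ψ-Tan(K, x). In particular, if Ψ-Tan(K, x_i) = C_U(ℝ^d; 0) for every i, then Ψ-Tan(K, x) ⊇ C_U(ℝ^d; 0). -/

import Mathlib

open Set Metric Filter MeasureTheory

noncomputable section

/-- `ℝ^d` with the Euclidean metric. -/
abbrev Euc (d : ℕ) := EuclideanSpace ℝ (Fin d)

/-- The excess of `A` over `B`: `sup_{a ∈ A} inf_{b ∈ B} |a - b|`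
(with the convention that it is `0` when `A = ∅`). -/
noncomputable def exc {d : ℕ} (A B : Set (Euc d)) : ℝ :=
  sSup ((fun a => sInf ((fun b => dist a b) '' B)) '' A)

/-- Attouch–Wets convergence of a sequence of sets to a set. -/
def AWTendsto {d : ℕ} (X : ℕ → Set (Euc d)) (L : Set (Euc d)) : Prop :=
  ∀ r : ℝ, 0 < r →
    Tendsto (fun i => exc (X i ∩ closedBall 0 r) L) atTop (nhds 0) ∧
    Tendsto (fun i => exc (L ∩ closedBall 0 r) (X i)) atTop (nhds 0)

/-- `S` is a pseudotangent to `K` at `x`: `S` is a nonempty closed set which is an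
Attouch–Wets limit of `(1/rᵢ)(K - xᵢ)` for some positive scales `rᵢ → 0` and points
`xᵢ ∈ K`, `xᵢ → x`. -/
def IsPseudotangent {d : ℕ} (K : Set (Euc d)) (x : Euc d) (S : Set (Euc d)) : Prop :=
  S.Nonempty ∧ IsClosed S ∧
    ∃ (r : ℕ → ℝ) (y : ℕ → Euc d),
      (∀ i, 0 < r i) ∧ Tendsto r atTop (nhds 0) ∧
      (∀ i, y i ∈ K) ∧ Tendsto y atTop (nhds x) ∧
      AWTendsto (fun i => (fun z => (r i)⁻¹ • (z - y i)) '' K) S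

/-- `Ψ-Tan(K, x)`, the collection of pseudotangents to `K` at `x`. -/
def pseudoTangents {d : ℕ} (K : Set (Euc d)) (x : Euc d) : Set (Set (Euc d)) :=
  {S | IsPseudotangent K x S}

/-- `T` is a tangent to `K` at `x`: `T` is a nonempty closed set which is an
Attouch–Wets limit of `(1/rᵢ)(K - x)` for some positive scales `rᵢ → 0`. -/
def IsTangent {d : ℕ} (K : Set (Euc d)) (x : Euc d) (T : Set (Euc d)) : Prop :=
  T.Nonempty ∧ IsClosed T ∧
    ∃ r : ℕ → ℝ,
      (∀ i, 0 < r i) ∧ Tendsto r atTop (nhds 0) ∧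
      AWTendsto (fun i => (fun z => (r i)⁻¹ • (z - x)) '' K) T

/-- `Tan(K, x)`, the collection of tangents to `K` at `x`. -/
def tangents {d : ℕ} (K : Set (Euc d)) (x : Euc d) : Set (Set (Euc d)) :=
  {T | IsTangent K x T}

/-- `C_U(ℝ^d; 0)`: closed subsets of `ℝ^d` containing the origin, all of whose
connected components are unbounded. -/
def CU (d : ℕ) : Set (Set (Euc d)) :=
  {S | IsClosed S ∧ (0 : Euc d) ∈ S ∧
    ∀ z ∈ S, ¬ Bornology.IsBounded (connectedComponentIn S z)}

/-- `K` is uniformly disconnected with constant `lam > 0`: for all distinct `x, y ∈ K`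
and every finite chain `p 0 = x, …, p n = y` of points of `K`, some consecutive pair of
chain points is at distance greater than `lam * |x - y|`. -/
def UniformlyDisconnectedWith {d : ℕ} (K : Set (Euc d)) (lam : ℝ) : Prop :=
  ∀ x ∈ K, ∀ y ∈ K, x ≠ y →
    ∀ (n : ℕ) (p : ℕ → Euc d), (∀ i ≤ n, p i ∈ K) → p 0 = x → p n = y →
      ∃ i < n, lam * dist x y < dist (p (i + 1)) (p i)

/-- `K` is uniformly disconnected. -/
def UniformlyDisconnected {d : ℕ} (K : Set (Euc d)) : Prop :=
  ∃ lam > 0, UniformlyDisconnectedWith K lam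

/-- `f : [0,1] → ℝ^d` is a Lipschitz capture of `K`: `f` is Lipschitz on `[0,1]` and
`K ⊆ f([0,1])`. -/
def IsLipschitzCapture {d : ℕ} (f : ℝ → Euc d) (K : Set (Euc d)) : Prop :=
  (∃ L : NNReal, LipschitzOnWith L f (Icc 0 1)) ∧ K ⊆ f '' Icc (0 : ℝ) 1

/-- `z` is a point of `H¹`-density `1` of `G`:
`H¹(G ∩ B̄(z,r)) / (2r) → 1` as `r → 0⁺`. -/
def H1DensityOne {d : ℕ} (G : Set (Euc d)) (z : Euc d) : Prop :=
  Tendsto (fun r : ℝ => (μH[1] (G ∩ closedBall z r)).toReal / (2 * r))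
    (nhdsWithin 0 (Ioi 0)) (nhds 1)
lemma my_inner_nonneg {d : ℕ} (a : Euc d) (B : Set (Euc d)) :
    0 ≤ sInf ((fun b => dist a b) '' B) :=
  Real.sInf_nonneg (by rintro _ ⟨b, _, rfl⟩; exact dist_nonneg)

lemma my_exc_nonneg {d : ℕ} (A B : Set (Euc d)) : 0 ≤ exc A B :=
  Real.sSup_nonneg (by rintro _ ⟨a, _, rfl⟩; exact my_inner_nonneg a B)

lemma my_inner_le {d : ℕ} (a : Euc d) {B : Set (Euc d)} {b : Euc d} (hb : b ∈ B) :
    sInf ((fun b' => dist a b') '' B) ≤ dist a b :=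
  csInf_le ⟨0, by rintro _ ⟨b', _, rfl⟩; exact dist_nonneg⟩ ⟨b, hb, rfl⟩

lemma my_exc_le {d : ℕ} {A B : Set (Euc d)} {c : ℝ}
    (h : ∀ a ∈ A, sInf ((fun b => dist a b) '' B) ≤ c) (hc : 0 ≤ c) : exc A B ≤ c :=
  Real.sSup_le (by rintro _ ⟨a, ha, rfl⟩; exact h a ha) hc

lemma my_le_exc {d : ℕ} {A B : Set (Euc d)} {a : Euc d} (ha : a ∈ A) {M : ℝ}
    (hM : ∀ a' ∈ A, sInf ((fun b => dist a' b) '' B) ≤ M) :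
    sInf ((fun b => dist a b) '' B) ≤ exc A B :=
  le_csSup ⟨max M 0, by
    rintro _ ⟨a', ha', rfl⟩; exact (hM a' ha').trans (le_max_left _ _)⟩ ⟨a, ha, rfl⟩

lemma my_exc_mono {d : ℕ} {B : Set (Euc d)} (hBne : B.Nonempty) (C : Set (Euc d))
    {ρ R : ℝ} (hρR : ρ ≤ R) :
    exc (C ∩ closedBall 0 ρ) B ≤ exc (C ∩ closedBall 0 R) B := by
  obtain ⟨b₀, hb₀⟩ := hBne
  have hM : ∀ a ∈ C ∩ closedBall 0 R, sInf ((fun b => dist a b) '' B) ≤ R + dist (0 : Euc d) b₀ := by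
    intro a ha
    calc sInf ((fun b => dist a b) '' B) ≤ dist a b₀ := my_inner_le a hb₀
      _ ≤ dist a 0 + dist 0 b₀ := dist_triangle _ _ _
      _ ≤ R + dist 0 b₀ := by
          have := mem_closedBall.1 ha.2
          linarith
  refine my_exc_le (fun a ha => ?_) (my_exc_nonneg _ _)
  exact my_le_exc (⟨ha.1, closedBall_subset_closedBall hρR ha.2⟩ : _) hM

/-- If `K ⊆ ℝ^d` is nonempty and closed, `(xᵢ) ⊆ K` converges to `x ∈ K`, and `S` is a
nonempty closed set with `S ∈ Ψ-Tan(K, xᵢ)` for every `i`, then `S ∈ Ψ-Tan(K, x)`.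
In particular, if `Ψ-Tan(K, xᵢ) = C_U(ℝ^d; 0)` for every `i`, then
`Ψ-Tan(K, x) ⊇ C_U(ℝ^d; 0)`. -/
theorem stmt7 (d : ℕ) (K : Set (Euc d)) (hKne : K.Nonempty) (hKcl : IsClosed K)
    (x : ℕ → Euc d) (hxK : ∀ i, x i ∈ K)
    (x₀ : Euc d) (hx₀ : x₀ ∈ K) (hlim : Tendsto x atTop (nhds x₀)) :
    (∀ S : Set (Euc d), S.Nonempty → IsClosed S →
        (∀ i, S ∈ pseudoTangents K (x i)) → S ∈ pseudoTangents K x₀) ∧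
    ((∀ i, pseudoTangents K (x i) = CU d) → CU d ⊆ pseudoTangents K x₀) := by
  have main : ∀ S : Set (Euc d), S.Nonempty → IsClosed S →
      (∀ i, S ∈ pseudoTangents K (x i)) → S ∈ pseudoTangents K x₀ := by
    intro S hSne hScl hS
    choose r y hrpos hrlim hyK hylim hAW using fun i => (hS i).2.2
    -- the rescaled sets
    set X : ℕ → ℕ → Set (Euc d) :=
      fun i j => (fun z => (r i j)⁻¹ • (z - y i j)) '' K with hX
    have hXne : ∀ i j, (X i j).Nonempty := fun i j => hKne.image _
    have hpos : ∀ i : ℕ, (0:ℝ) < 1 / (i + 1) := by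
      intro i; positivity
    have hev : ∀ i : ℕ, ∃ j : ℕ, r i j < 1 / (i + 1) ∧ dist (y i j) (x i) < 1 / (i + 1) ∧
        exc (X i j ∩ closedBall 0 (i + 1)) S < 1 / (i + 1) ∧
        exc (S ∩ closedBall 0 (i + 1)) (X i j) < 1 / (i + 1) := by
      intro i
      have h1 : ∀ᶠ j in atTop, r i j < 1 / (i + 1) :=
        (hrlim i).eventually (Filter.Tendsto.eventually_lt_const (hpos i) tendsto_id) |>.mono
          fun j hj => hj
      have h2 : ∀ᶠ j in atTop, dist (y i j) (x i) < 1 / (i + 1) := by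
        have := (tendsto_iff_dist_tendsto_zero.1 (hylim i))
        exact this.eventually (Filter.Tendsto.eventually_lt_const (hpos i) tendsto_id) |>.mono
          fun j hj => hj
      have hAWi := hAW i ((i : ℝ) + 1) (by positivity)
      have h3 : ∀ᶠ j in atTop, exc (X i j ∩ closedBall 0 (i + 1)) S < 1 / (i + 1) :=
        hAWi.1.eventually (Filter.Tendsto.eventually_lt_const (hpos i) tendsto_id) |>.mono
          fun j hj => hj
      have h4 : ∀ᶠ j in atTop, exc (S ∩ closedBall 0 (i + 1)) (X i j) < 1 / (i + 1) :=
        hAWi.2.eventually (Filter.Tendsto.eventually_lt_const (hpos i) tendsto_id) |>.mono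
          fun j hj => hj
      exact ((h1.and h2).and (h3.and h4)).exists.imp fun j hj =>
        ⟨hj.1.1, hj.1.2, hj.2.1, hj.2.2⟩
    choose j hj1 hj2 hj3 hj4 using hev
    refine ⟨hSne, hScl, fun i => r i (j i), fun i => y i (j i), fun i => hrpos i (j i),
      ?_, fun i => hyK i (j i), ?_, ?_⟩
    · -- r → 0
      refine squeeze_zero (fun i => (hrpos i (j i)).le) (fun i => (hj1 i).le) ?_
      exact tendsto_one_div_add_atTop_nhds_zero_nat
    · -- y → x₀
      rw [tendsto_iff_dist_tendsto_zero]
      refine squeeze_zero (fun i => dist_nonneg) (fun i => dist_triangle _ (x i) x₀) ?_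
      have hd : Tendsto (fun i => dist (x i) x₀) atTop (nhds 0) :=
        tendsto_iff_dist_tendsto_zero.1 hlim
      have h0 : Tendsto (fun i => dist (y i (j i)) (x i) + dist (x i) x₀) atTop
          (nhds (0 + 0)) := by
        refine Tendsto.add ?_ hd
        exact squeeze_zero (fun i => dist_nonneg) (fun i => (hj2 i).le)
          tendsto_one_div_add_atTop_nhds_zero_nat
      simpa using h0
    · -- AW convergence
      intro ρ hρ
      have hev' : ∀ᶠ i : ℕ in atTop, ρ ≤ (i : ℝ) + 1 := by
        filter_upwards [eventually_ge_atTop ⌈ρ⌉₊] with i hi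
        calc ρ ≤ (⌈ρ⌉₊ : ℝ) := Nat.le_ceil ρ
          _ ≤ (i : ℝ) := by exact_mod_cast hi
          _ ≤ (i : ℝ) + 1 := by linarith
      constructor
      · refine squeeze_zero' (Eventually.of_forall fun i => my_exc_nonneg _ _) ?_
          tendsto_one_div_add_atTop_nhds_zero_nat
        filter_upwards [hev'] with i hi
        exact (my_exc_mono hSne _ hi).trans (hj3 i).le
      · refine squeeze_zero' (Eventually.of_forall fun i => my_exc_nonneg _ _) ?_
          tendsto_one_div_add_atTop_nhds_zero_nat
        filter_upwards [hev'] with i hi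
        exact (my_exc_mono (hXne i (j i)) _ hi).trans (hj4 i).le
  refine ⟨main, fun hall S hSCU => ?_⟩
  obtain ⟨hScl, hS0, -⟩ := id hSCU
  exact main S ⟨0, hS0⟩ hScl fun i => (hall i).symm ▸ hSCU
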